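/- Let (M, g) be a complete Riemannian manifold and let f ∈ L²(M) be smooth with Δf = g where g ∈ L²(M). Suppose M admits a covering by geodesically controlled domains such that the cutoff argument applies (e.g. M is a minimal hypersurface in ℝⁿ regular at infinity covered by Euclidean cubes with bounded overlap). Then f ∈ W^{1,2}(M), with the estimate ∫_M |∇f|² ≤ 3‖f‖_{L²}‖g‖_{L²} + C‖f‖²_{L²} for a constant C depending only on the covering. -/

import Mathlib

noncomputable section
open scoped RealInnerProductSpace
open MeasureTheory

/-- Euclidean space `ℝᵈ`. -/
abbrev E (d : ℕ) := EuclideanSpace ℝ (Fin d)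

/-- The `i`-th standard basis vector. -/
def sb {d : ℕ} (i : Fin d) : E d := EuclideanSpace.single i 1

/-- The Laplacian of a function on `ℝᵈ`. -/
def lap {d : ℕ} (f : E d → ℝ) (x : E d) : ℝ :=
  ∑ i, iteratedFDeriv ℝ 2 f x ![sb i, sb i]

open Metric

variable {d : ℕ}

lemma inner_gradient (g : E d → ℝ) (x v : E d) : ⟪gradient g x, v⟫ = fderiv ℝ g x v :=
  InnerProductSpace.toDual_symm_apply

lemma norm_gradient (g : E d → ℝ) (x : E d) : ‖gradient g x‖ = ‖fderiv ℝ g x‖ :=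
  LinearIsometryEquiv.norm_map _ _

lemma sum_deriv_mul (g h : E d → ℝ) (x : E d) :
    ∑ i, fderiv ℝ g x (sb i) * fderiv ℝ h x (sb i) = ⟪gradient g x, gradient h x⟫ := by
  have H := (EuclideanSpace.basisFun (Fin d) ℝ).sum_inner_mul_inner
    (gradient g x) (gradient h x)
  rw [← H]
  refine Finset.sum_congr rfl fun i _ => ?_
  rw [EuclideanSpace.basisFun_apply,
    real_inner_comm (gradient h x) (EuclideanSpace.single i 1),
    inner_gradient, inner_gradient]
  rfl

lemma integral_mul_eq_inner {f g : E d → ℝ} (hf : MemLp f 2 volume) (hg : MemLp g 2 volume) :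
    ∫ x, f x * g x = @inner ℝ _ _ (hf.toLp f) (hg.toLp g) := by
  rw [L2.inner_def]
  refine integral_congr_ae ?_
  filter_upwards [hf.coeFn_toLp, hg.coeFn_toLp] with x h1 h2
  rw [h1, h2, RCLike.inner_apply, conj_trivial, mul_comm]

lemma integrable_mul_L2 {f g : E d → ℝ} (hf : MemLp f 2 volume) (hg : MemLp g 2 volume) :
    Integrable (fun x => f x * g x) volume := by
  have := L2.integrable_inner (𝕜 := ℝ) (hf.toLp f) (hg.toLp g)
  refine this.congr ?_
  filter_upwards [hf.coeFn_toLp, hg.coeFn_toLp] with x h1 h2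
  rw [h1, h2, RCLike.inner_apply, conj_trivial, mul_comm]

lemma integral_mul_le_L2 {f g : E d → ℝ} (hf : MemLp f 2 volume) (hg : MemLp g 2 volume) :
    ∫ x, f x * g x ≤ (eLpNorm f 2 volume).toReal * (eLpNorm g 2 volume).toReal := by
  rw [integral_mul_eq_inner hf hg]
  calc _ ≤ ‖hf.toLp f‖ * ‖hg.toLp g‖ := real_inner_le_norm _ _
  _ = _ := by rw [Lp.norm_toLp, Lp.norm_toLp]

lemma integral_sq_eq {f : E d → ℝ} (hf : MemLp f 2 volume) :
    ∫ x, f x * f x = (eLpNorm f 2 volume).toReal ^ 2 := by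
  rw [integral_mul_eq_inner hf hf, real_inner_self_eq_norm_sq, Lp.norm_toLp]
variable {d : ℕ}

lemma fderiv_smooth (f : E d → ℝ) (hf : ContDiff ℝ (⊤ : ℕ∞) f) :
    ContDiff ℝ (⊤ : ℕ∞) (fderiv ℝ f) :=
  (contDiff_infty_iff_fderiv.1 (hf.of_le (by simp))).2

lemma second_deriv (f : E d → ℝ) (hf : ContDiff ℝ (⊤ : ℕ∞) f) (x : E d) (i : Fin d) :
    fderiv ℝ (fun y => fderiv ℝ f y (sb i)) x (sb i) = iteratedFDeriv ℝ 2 f x ![sb i, sb i] := by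
  rw [iteratedFDeriv_two_apply]
  have hdf : DifferentiableAt ℝ (fderiv ℝ f) x :=
    ((fderiv_smooth f hf).differentiable (by simp)).differentiableAt
  have h := fderiv_clm_apply (c := fderiv ℝ f) (u := fun _ => sb i) hdf (differentiableAt_const _)
  rw [h]
  simp

lemma deriv_i_smooth (f : E d → ℝ) (hf : ContDiff ℝ (⊤ : ℕ∞) f) (i : Fin d) :
    ContDiff ℝ (⊤ : ℕ∞) (fun x => fderiv ℝ f x (sb i)) :=
  (fderiv_smooth f hf).clm_apply contDiff_const

lemma ibp_main (f η : E d → ℝ) (hf : ContDiff ℝ (⊤ : ℕ∞) f) (hf2 : MemLp f 2 volume)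
    (hη : ContDiff ℝ (⊤ : ℕ∞) η) (hηc : HasCompactSupport η) :
    ∫ x, (η x * ‖gradient f x‖) * (η x * ‖gradient f x‖)
      = -∫ x, (η x * (η x * lap f x) + 2 * (η x * ⟪gradient η x, gradient f x⟫)) * f x := by
  have hfd : Differentiable ℝ f := hf.differentiable (by simp)
  have hηd : Differentiable ℝ η := hη.differentiable (by simp)
  have hDsm : ∀ i : Fin d, ContDiff ℝ (⊤ : ℕ∞) (fun x => fderiv ℝ f x (sb i)) :=
    deriv_i_smooth f hf
  have hDd : ∀ i, Differentiable ℝ (fun x => fderiv ℝ f x (sb i)) :=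
    fun i => (hDsm i).differentiable (by simp)
  have hDc : ∀ i, Continuous (fun x => fderiv ℝ f x (sb i)) := fun i => (hDd i).continuous
  set φ : Fin d → E d → ℝ := fun i x => η x * (η x * fderiv ℝ f x (sb i)) with hφdef
  have hφd : ∀ i, Differentiable ℝ (φ i) := fun i => hηd.mul (hηd.mul (hDd i))
  have hφcont : ∀ i, Continuous (φ i) := fun i => (hφd i).continuous
  have hφc : ∀ i, HasCompactSupport (φ i) := fun i => hηc.mul_right
  have hφ'cont : ∀ i, Continuous (fun x => fderiv ℝ (φ i) x (sb i)) := by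
    intro i
    have h1 : ContDiff ℝ (⊤ : ℕ∞) (φ i) := hη.mul (hη.mul (hDsm i))
    exact ((contDiff_infty_iff_fderiv.1 h1).2.clm_apply contDiff_const).continuous
  have hφ'c : ∀ i, HasCompactSupport fun x => fderiv ℝ (φ i) x (sb i) :=
    fun i => (hφc i).fderiv_apply ℝ (sb i)
  have hint1 : ∀ i, Integrable (fun x => fderiv ℝ (φ i) x (sb i) * f x) volume :=
    fun i => integrable_mul_L2 ((hφ'cont i).memLp_of_hasCompactSupport (hφ'c i)) hf2
  have hint2 : ∀ i, Integrable (fun x => φ i x * fderiv ℝ f x (sb i)) volume :=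
    fun i => ((hφcont i).mul (hDc i)).integrable_of_hasCompactSupport ((hφc i).mul_right)
  have hint3 : ∀ i, Integrable (fun x => φ i x * f x) volume :=
    fun i => integrable_mul_L2 ((hφcont i).memLp_of_hasCompactSupport (hφc i)) hf2
  have ibp : ∀ i : Fin d, ∫ x, φ i x * fderiv ℝ f x (sb i)
      = -∫ x, fderiv ℝ (φ i) x (sb i) * f x :=
    fun i => integral_mul_fderiv_eq_neg_fderiv_mul_of_integrable
      (hint1 i) (hint2 i) (hint3 i) (fun x _ => hφd i x) (fun x _ => hfd x)
  have hexp : ∀ (i) (x : E d), fderiv ℝ (φ i) x (sb i)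
      = η x * (η x * iteratedFDeriv ℝ 2 f x ![sb i, sb i])
        + 2 * (η x * (fderiv ℝ η x (sb i) * fderiv ℝ f x (sb i))) := by
    intro i x
    have e1 : fderiv ℝ (φ i) x = η x • fderiv ℝ (fun y => η y * fderiv ℝ f y (sb i)) x
        + (η x * fderiv ℝ f x (sb i)) • fderiv ℝ η x :=
      fderiv_mul (hηd x) ((hηd x).mul (hDd i x))
    have e2 : fderiv ℝ (fun y => η y * fderiv ℝ f y (sb i)) x
        = η x • fderiv ℝ (fun y => fderiv ℝ f y (sb i)) x
          + fderiv ℝ f x (sb i) • fderiv ℝ η x :=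
      fderiv_mul (hηd x) (hDd i x)
    rw [e1, e2]
    simp only [ContinuousLinearMap.add_apply, ContinuousLinearMap.coe_smul', Pi.smul_apply,
      smul_eq_mul]
    rw [second_deriv f hf x i]
    ring
  have h0 : ∀ x, (η x * ‖gradient f x‖) * (η x * ‖gradient f x‖)
      = ∑ i, φ i x * fderiv ℝ f x (sb i) := by
    intro x
    have h1 : (η x * ‖gradient f x‖) * (η x * ‖gradient f x‖)
        = (η x * η x) * ∑ i, fderiv ℝ f x (sb i) * fderiv ℝ f x (sb i) := by
      rw [sum_deriv_mul f f x, real_inner_self_eq_norm_mul_norm]; ring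
    rw [h1, Finset.mul_sum]
    exact Finset.sum_congr rfl fun i _ => by ring
  calc ∫ x, (η x * ‖gradient f x‖) * (η x * ‖gradient f x‖)
      = ∫ x, ∑ i, φ i x * fderiv ℝ f x (sb i) := by simp_rw [h0]
    _ = ∑ i, ∫ x, φ i x * fderiv ℝ f x (sb i) := integral_finset_sum _ (fun i _ => hint2 i)
    _ = ∑ i, -∫ x, fderiv ℝ (φ i) x (sb i) * f x := Finset.sum_congr rfl (fun i _ => ibp i)
    _ = -∑ i, ∫ x, fderiv ℝ (φ i) x (sb i) * f x := by rw [← Finset.sum_neg_distrib]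
    _ = -∫ x, ∑ i, fderiv ℝ (φ i) x (sb i) * f x := by
        rw [integral_finset_sum _ (fun i _ => hint1 i)]
    _ = -∫ x, (η x * (η x * lap f x) + 2 * (η x * ⟪gradient η x, gradient f x⟫)) * f x := by
        congr 1
        refine integral_congr_ae (Filter.Eventually.of_forall fun x => ?_)
        dsimp only
        rw [← Finset.sum_mul]
        congr 1
        calc ∑ i, fderiv ℝ (φ i) x (sb i)
            = ∑ i, (η x * (η x * iteratedFDeriv ℝ 2 f x ![sb i, sb i])
              + 2 * (η x * (fderiv ℝ η x (sb i) * fderiv ℝ f x (sb i)))) :=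
              Finset.sum_congr rfl fun i _ => hexp i x
          _ = η x * (η x * ∑ i, iteratedFDeriv ℝ 2 f x ![sb i, sb i])
              + 2 * (η x * ∑ i, fderiv ℝ η x (sb i) * fderiv ℝ f x (sb i)) := by
              rw [Finset.sum_add_distrib, Finset.mul_sum, Finset.mul_sum, Finset.mul_sum,
                Finset.mul_sum]
          _ = _ := by rw [sum_deriv_mul η f x]; rfl
def bump (d : ℕ) : ContDiffBump (0 : E d) := ⟨1, 2, one_pos, one_lt_two⟩

variable {d : ℕ}

lemma cutoff (K : ℝ) (hK : ∀ x : E d, ‖fderiv ℝ (⇑(bump d)) x‖ ≤ K)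
    (R : ℝ) (hR : 1 ≤ R) :
    ∃ η : E d → ℝ, ContDiff ℝ (⊤ : ℕ∞) η ∧ HasCompactSupport η ∧
      (∀ x, 0 ≤ η x ∧ η x ≤ 1 ∧ ‖fderiv ℝ η x‖ ≤ K) ∧
      (∀ x ∈ closedBall (0 : E d) R, η x = 1) := by
  have hR0 : 0 < R := lt_of_lt_of_le one_pos hR
  have hK0 : 0 ≤ K := le_trans (norm_nonneg _) (hK 0)
  refine ⟨fun x => bump d (R⁻¹ • x), ?_, ?_, fun x => ⟨(bump d).nonneg, (bump d).le_one, ?_⟩, ?_⟩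
  · exact (bump d).contDiff.comp (contDiff_id.const_smul R⁻¹)
  · refine HasCompactSupport.intro (isCompact_closedBall (0 : E d) (2 * R)) fun x hx => ?_
    refine (bump d).zero_of_le_dist ?_
    simp only [mem_closedBall, dist_zero_right, not_le] at hx ⊢
    show (2:ℝ) ≤ ‖R⁻¹ • x‖
    rw [norm_smul, norm_inv, Real.norm_eq_abs, abs_of_pos hR0, le_inv_mul_iff₀ hR0]
    linarith
  · -- fderiv bound
    have hL : HasFDerivAt (fun y : E d => R⁻¹ • y)
        (R⁻¹ • ContinuousLinearMap.id ℝ (E d)) x := by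
      exact (hasFDerivAt_id x).const_smul R⁻¹
    have hb : HasFDerivAt (⇑(bump d)) (fderiv ℝ (⇑(bump d)) (R⁻¹ • x)) (R⁻¹ • x) :=
      (((bump d).contDiff (n := 1)).differentiable (by simp) _).hasFDerivAt
    have hcomp : HasFDerivAt (fun y : E d => bump d (R⁻¹ • y))
        ((fderiv ℝ (⇑(bump d)) (R⁻¹ • x)).comp (R⁻¹ • ContinuousLinearMap.id ℝ (E d))) x :=
      hb.comp x hL
    rw [hcomp.fderiv]
    calc ‖(fderiv ℝ (⇑(bump d)) (R⁻¹ • x)).comp (R⁻¹ • ContinuousLinearMap.id ℝ (E d))‖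
        ≤ ‖fderiv ℝ (⇑(bump d)) (R⁻¹ • x)‖ * ‖R⁻¹ • ContinuousLinearMap.id ℝ (E d)‖ :=
          ContinuousLinearMap.opNorm_comp_le _ _
      _ ≤ K * 1 := by
          refine mul_le_mul (hK _) ?_ (norm_nonneg _) hK0
          refine le_trans (ContinuousLinearMap.opNorm_smul_le _ _) ?_
          rw [norm_inv, Real.norm_eq_abs, abs_of_pos hR0]
          have h1 : ‖ContinuousLinearMap.id ℝ (E d)‖ ≤ 1 := ContinuousLinearMap.norm_id_le
          have h2 : (0:ℝ) ≤ R⁻¹ := inv_nonneg.2 hR0.le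
          have h3 : R⁻¹ ≤ 1 := inv_le_one_of_one_le₀ hR
          nlinarith
      _ = K := mul_one K
  · intro x hx
    refine (bump d).one_of_mem_closedBall ?_
    simp only [mem_closedBall, dist_zero_right] at hx ⊢
    rw [norm_smul, norm_inv, Real.norm_eq_abs, abs_of_pos hR0,
      show ((bump d).rIn : ℝ) = 1 from rfl]
    rw [inv_mul_le_iff₀ hR0]
    linarith


set_option maxHeartbeats 1000000 in
/-- (the `W^{1,2}` lemma, in the model Euclidean situation where
the covering by cubes is available). There is a constant `C`, depending only
on the covering (i.e. on the dimension `d`), such that every smooth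
`f ∈ L²` with `Δf = g ∈ L²` satisfies `∇f ∈ L²` with
`∫ |∇f|² ≤ 3 ‖f‖_{L²} ‖g‖_{L²} + C ‖f‖_{L²}²`. -/
theorem stmt_8 (d : ℕ) :
    ∃ C : ℝ, ∀ f : E d → ℝ, ContDiff ℝ (⊤ : ℕ∞) f → MemLp f 2 volume →
      MemLp (lap f) 2 volume →
      MemLp (fun x => gradient f x) 2 volume ∧
        ∫ x, ‖gradient f x‖ ^ 2 ≤
          3 * (eLpNorm f 2 volume).toReal * (eLpNorm (lap f) 2 volume).toReal
            + C * (eLpNorm f 2 volume).toReal ^ 2 := by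
  obtain ⟨K, hK⟩ := ((bump d).hasCompactSupport.fderiv ℝ).exists_bound_of_continuous
    (contDiff_infty_iff_fderiv.1 ((bump d).contDiff (n := (⊤ : ℕ∞)))).2.continuous
  have hK0 : 0 ≤ K := le_trans (norm_nonneg _) (hK 0)
  refine ⟨4 * K ^ 2, fun f hf hf2 hlap => ?_⟩
  set a := (eLpNorm f 2 volume).toReal with ha_def
  set b := (eLpNorm (lap f) 2 volume).toReal with hb_def
  have ha : 0 ≤ a := ENNReal.toReal_nonneg
  have hb : 0 ≤ b := ENNReal.toReal_nonneg
  have hGc : Continuous (fun x => gradient f x) := by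
    have : (fun x => gradient f x)
        = fun x => (InnerProductSpace.toDual ℝ (E d)).symm (fderiv ℝ f x) := rfl
    rw [this]
    exact (LinearIsometryEquiv.continuous _).comp (fderiv_smooth f hf).continuous
  set M : ℝ := 2 * (a * b) + 4 * K ^ 2 * a ^ 2 with hM_def
  have hM0 : 0 ≤ M := by positivity
  -- key uniform estimate
  have key : ∀ R : ℝ, 1 ≤ R →
      ∫⁻ x in closedBall (0 : E d) R, ENNReal.ofReal (‖gradient f x‖ ^ 2)
        ≤ ENNReal.ofReal M := by
    intro R hR
    obtain ⟨η, hηsm, hηc, hηp, hη1⟩ := cutoff K hK R hR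
    set A := fun x => η x * ‖gradient f x‖ with hA_def
    have hAc : Continuous A := hηsm.continuous.mul hGc.norm
    have hAcs : HasCompactSupport A := hηc.mul_right
    have hA2 : MemLp A 2 volume := hAc.memLp_of_hasCompactSupport hAcs
    set s := (eLpNorm A 2 volume).toReal with hs_def
    have hs0 : 0 ≤ s := ENNReal.toReal_nonneg
    have hIA : ∫ x, A x * A x = s ^ 2 := integral_sq_eq hA2
    have hibp := ibp_main f η hf hf2 hηsm hηc
    -- integrability of the two pieces
    have hgeta : Continuous (fun x => gradient η x) := by
      have : (fun x => gradient η x)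
          = fun x => (InnerProductSpace.toDual ℝ (E d)).symm (fderiv ℝ η x) := rfl
      rw [this]
      exact (LinearIsometryEquiv.continuous _).comp
        (contDiff_infty_iff_fderiv.1 hηsm).2.continuous
    have hq1mem : MemLp (fun x => η x * (η x * lap f x)) 2 volume := by
      refine MemLp.of_le hlap
        (hηsm.continuous.aestronglyMeasurable.mul
          (hηsm.continuous.aestronglyMeasurable.mul hlap.aestronglyMeasurable)) ?_
      refine Filter.Eventually.of_forall fun x => ?_
      obtain ⟨h0, h1, -⟩ := hηp x
      simp only [Real.norm_eq_abs, abs_mul]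
      rw [abs_of_nonneg h0]
      nlinarith [abs_nonneg (lap f x), mul_nonneg h0 (mul_nonneg (sub_nonneg.2 h1) (abs_nonneg (lap f x))), mul_nonneg (sub_nonneg.2 h1) (abs_nonneg (lap f x))]
    have hq2cc : HasCompactSupport (fun x => 2 * (η x * ⟪gradient η x, gradient f x⟫)) :=
      HasCompactSupport.mul_left hηc.mul_right
    have hq2cont : Continuous (fun x => 2 * (η x * ⟪gradient η x, gradient f x⟫)) :=
      continuous_const.mul (hηsm.continuous.mul (hgeta.inner hGc))
    have hq1int : Integrable (fun x => η x * (η x * lap f x) * f x) volume :=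
      integrable_mul_L2 hq1mem hf2
    have hq2int : Integrable (fun x => 2 * (η x * ⟪gradient η x, gradient f x⟫) * f x) volume :=
      integrable_mul_L2 (hq2cont.memLp_of_hasCompactSupport hq2cc) hf2
    have hpint : Integrable
        (fun x => (η x * (η x * lap f x) + 2 * (η x * ⟪gradient η x, gradient f x⟫)) * f x)
        volume := by
      have := hq1int.add hq2int
      refine this.congr (Filter.Eventually.of_forall fun x => ?_)
      simp only [Pi.add_apply]
      ring
    have hrhsint : Integrable
        (fun x => ‖f x‖ * ‖lap f x‖ + 2 * K * (‖f x‖ * A x)) volume :=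
      (integrable_mul_L2 hf2.norm hlap.norm).add
        ((integrable_mul_L2 hf2.norm hA2).const_mul (2 * K))
    -- pointwise estimate
    have hpt : ∀ x, -((η x * (η x * lap f x) + 2 * (η x * ⟪gradient η x, gradient f x⟫)) * f x)
        ≤ ‖f x‖ * ‖lap f x‖ + 2 * K * (‖f x‖ * A x) := by
      intro x
      obtain ⟨h0, h1, hdK⟩ := hηp x
      have hgK : ‖gradient η x‖ ≤ K := by rw [norm_gradient]; exact hdK
      have hcs : |⟪gradient η x, gradient f x⟫| ≤ K * ‖gradient f x‖ :=
        le_trans (abs_real_inner_le_norm _ _)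
          (mul_le_mul_of_nonneg_right hgK (norm_nonneg _))
      show _ ≤ ‖f x‖ * ‖lap f x‖ + 2 * K * (‖f x‖ * (η x * ‖gradient f x‖))
      simp only [Real.norm_eq_abs]
      have e1a : -(|lap f x| * |f x|) ≤ lap f x * f x := by
        rw [← abs_mul (lap f x) (f x)]; exact neg_abs_le _
      have e1b : lap f x * f x ≤ |lap f x| * |f x| := by
        rw [← abs_mul (lap f x) (f x)]; exact le_abs_self _
      have habs : |⟪gradient η x, gradient f x⟫ * f x| ≤ K * ‖gradient f x‖ * |f x| := by
        rw [abs_mul]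
        exact mul_le_mul_of_nonneg_right hcs (abs_nonneg _)
      have e2a : -(K * ‖gradient f x‖ * |f x|) ≤ ⟪gradient η x, gradient f x⟫ * f x :=
        neg_le_of_abs_le habs
      nlinarith [mul_nonneg (mul_nonneg h0 h0)
          (by linarith : (0:ℝ) ≤ |lap f x| * |f x| + lap f x * f x),
        mul_nonneg h0
          (by linarith : (0:ℝ) ≤ K * ‖gradient f x‖ * |f x| + ⟪gradient η x, gradient f x⟫ * f x),
        mul_nonneg (mul_nonneg (abs_nonneg (lap f x)) (abs_nonneg (f x)))
          (by nlinarith : (0:ℝ) ≤ 1 - η x * η x),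
        abs_nonneg (f x), norm_nonneg (gradient f x), abs_nonneg (lap f x)]
    -- the quadratic inequality
    have hkey : s ^ 2 ≤ a * b + 2 * K * (a * s) := by
      rw [← hIA, hibp]
      calc -∫ x, (η x * (η x * lap f x) + 2 * (η x * ⟪gradient η x, gradient f x⟫)) * f x
          = ∫ x, -((η x * (η x * lap f x) + 2 * (η x * ⟪gradient η x, gradient f x⟫)) * f x) := by
            rw [integral_neg]
        _ ≤ ∫ x, (‖f x‖ * ‖lap f x‖ + 2 * K * (‖f x‖ * A x)) :=
            integral_mono hpint.neg hrhsint hpt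
        _ = (∫ x, ‖f x‖ * ‖lap f x‖) + 2 * K * ∫ x, ‖f x‖ * A x := by
            rw [integral_add (integrable_mul_L2 hf2.norm hlap.norm)
              ((integrable_mul_L2 hf2.norm hA2).const_mul (2 * K)),
              integral_const_mul]
        _ ≤ a * b + 2 * K * (a * s) := by
            have i1 : (∫ x, ‖f x‖ * ‖lap f x‖) ≤ a * b := by
              have := integral_mul_le_L2 hf2.norm hlap.norm
              rwa [eLpNorm_norm, eLpNorm_norm] at this
            have i2 : (∫ x, ‖f x‖ * A x) ≤ a * s := by
              have := integral_mul_le_L2 hf2.norm hA2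
              rwa [eLpNorm_norm] at this
            have hint2 := integrable_mul_L2 hf2.norm hA2
            have i2' : 2 * K * (∫ x, ‖f x‖ * A x) ≤ 2 * K * (a * s) :=
              mul_le_mul_of_nonneg_left i2 (by linarith)
            linarith
    have hM' : s ^ 2 ≤ M := by
      rw [hM_def]
      nlinarith [sq_nonneg (s - 2 * K * a)]
    -- conclude the localized lintegral bound
    have hAA : Integrable (fun x => A x * A x) volume :=
      (hAc.mul hAc).integrable_of_hasCompactSupport hAcs.mul_right
    calc ∫⁻ x in closedBall (0 : E d) R, ENNReal.ofReal (‖gradient f x‖ ^ 2)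
        ≤ ∫⁻ x in closedBall (0 : E d) R, ENNReal.ofReal (A x * A x) := by
          refine setLIntegral_mono (by fun_prop) fun x hx => ?_
          refine ENNReal.ofReal_le_ofReal ?_
          show _ ≤ (η x * ‖gradient f x‖) * (η x * ‖gradient f x‖)
          rw [hη1 x hx, one_mul, sq]
      _ ≤ ∫⁻ x, ENNReal.ofReal (A x * A x) := setLIntegral_le_lintegral _ _
      _ = ENNReal.ofReal (∫ x, A x * A x) :=
          (ofReal_integral_eq_lintegral_ofReal hAA
            (Filter.Eventually.of_forall fun x => mul_self_nonneg (A x))).symm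
      _ ≤ ENNReal.ofReal M := ENNReal.ofReal_le_ofReal (by rw [hIA]; exact hM')
  -- global lintegral bound by monotone convergence
  have hlint : ∫⁻ x, ENNReal.ofReal (‖gradient f x‖ ^ 2) ≤ ENNReal.ofReal M := by
    have hmeas : Measurable fun x : E d => ENNReal.ofReal (‖gradient f x‖ ^ 2) :=
      ((hGc.norm.pow 2).measurable).ennreal_ofReal
    have hmono : Monotone fun n : ℕ =>
        (closedBall (0 : E d) (n + 1)).indicator
          fun x => ENNReal.ofReal (‖gradient f x‖ ^ 2) := by
      intro m n hmn
      refine Set.indicator_le_indicator_of_subset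
        (closedBall_subset_closedBall (by exact_mod_cast by linarith : (m:ℝ) + 1 ≤ (n:ℝ) + 1))
        (fun x => by simp)
    have hsup : ∀ x : E d, ⨆ n : ℕ, (closedBall (0 : E d) (n + 1)).indicator
        (fun x => ENNReal.ofReal (‖gradient f x‖ ^ 2)) x
        = ENNReal.ofReal (‖gradient f x‖ ^ 2) := by
      intro x
      obtain ⟨n, hn⟩ := exists_nat_ge ‖x‖
      refine le_antisymm (iSup_le fun m => Set.indicator_le_self _ _ x) ?_
      refine le_iSup_of_le n ?_
      rw [Set.indicator_of_mem]
      simp only [mem_closedBall, dist_zero_right]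
      linarith
    calc ∫⁻ x, ENNReal.ofReal (‖gradient f x‖ ^ 2)
        = ∫⁻ x, ⨆ n : ℕ, (closedBall (0 : E d) (n + 1)).indicator
            (fun x => ENNReal.ofReal (‖gradient f x‖ ^ 2)) x := by
          exact lintegral_congr fun x => (hsup x).symm
      _ = ⨆ n : ℕ, ∫⁻ x, (closedBall (0 : E d) (n + 1)).indicator
            (fun x => ENNReal.ofReal (‖gradient f x‖ ^ 2)) x :=
          lintegral_iSup (fun n => hmeas.indicator measurableSet_closedBall) hmono
      _ ≤ ENNReal.ofReal M := by
          refine iSup_le fun n => ?_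
          rw [lintegral_indicator measurableSet_closedBall]
          exact key (n + 1) (by exact_mod_cast le_add_of_nonneg_left n.cast_nonneg)
  have hofReal : ∀ x : E d, ((‖gradient f x‖₊ : ENNReal) ^ (2:ℝ))
      = ENNReal.ofReal (‖gradient f x‖ ^ 2) := by
    intro x
    rw [← enorm_eq_nnnorm, ← ofReal_norm,
      ENNReal.ofReal_rpow_of_nonneg (norm_nonneg _) (by norm_num)]
    congr 1
    rw [← Real.rpow_natCast ‖gradient f x‖ 2]
    norm_num
  have hmem : MemLp (fun x => gradient f x) 2 volume := by
    refine ⟨hGc.aestronglyMeasurable, ?_⟩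
    rw [eLpNorm_eq_lintegral_rpow_enorm_toReal two_ne_zero ENNReal.ofNat_ne_top]
    refine ENNReal.rpow_lt_top_of_nonneg (by norm_num) ?_
    simp only [ENNReal.toReal_ofNat]
    have : ∫⁻ x, ((‖gradient f x‖₊ : ENNReal) ^ (2:ℝ)) ≤ ENNReal.ofReal M := by
      rw [lintegral_congr fun x => hofReal x]
      exact hlint
    exact ne_of_lt (lt_of_le_of_lt this ENNReal.ofReal_lt_top)
  refine ⟨hmem, ?_⟩
  have hfin : ∫ x, ‖gradient f x‖ ^ 2
      = (∫⁻ x, ENNReal.ofReal (‖gradient f x‖ ^ 2)).toReal := by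
    rw [integral_eq_lintegral_of_nonneg_ae
      (Filter.Eventually.of_forall fun x => sq_nonneg _)
      (hGc.norm.pow 2).aestronglyMeasurable]
  rw [hfin]
  have h1 : (∫⁻ x, ENNReal.ofReal (‖gradient f x‖ ^ 2)).toReal ≤ M := by
    have := ENNReal.toReal_mono ENNReal.ofReal_ne_top hlint
    rwa [ENNReal.toReal_ofReal hM0] at this
  have hab : 0 ≤ a * b := mul_nonneg ha hb
  calc (∫⁻ x, ENNReal.ofReal (‖gradient f x‖ ^ 2)).toReal ≤ M := h1
    _ ≤ 3 * a * b + 4 * K ^ 2 * a ^ 2 := by rw [hM_def]; linarith
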